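/- arXiv:2302.12809 — 2 statements merged into one kernel-verified Lean document; each statement's English description precedes it below -/
import Mathlib

section
/- Let P be a submonoid of a (discrete) group G. The map L̄_p ↦ L̄_p ⊗ L̄_p (p ∈ P) extends to a *-isomorphism from 𝒯̄_λ(P) onto the C*-algebra generated by {L̄_p ⊗ L̄_p : p ∈ P} in B(ℋ̄ ⊗ ℋ̄); that is, there is an isometric unital star-algebra homomorphism φ on 𝒯̄_λ(P) with φ(L̄_p) = L̄_p ⊗ L̄_p for all p ∈ P, whose range is the C*-algebra generated by these tensors. -/
/-! The diagonal `x ↦ (x, x)` and a padded concatenation `X × X → X` are injective, commute with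
left multiplication by `p ∈ P`, and their ranges contain every tuple that `p` maps into them. The
induced isometries `ℓ²(X) → ℓ²(X × X)` and `ℓ²(X × X) → ℓ²(X)` therefore have reducing ranges on
which `L̄_p` and `L̄_p ⊗ L̄_p` act as each other. Compressing along them gives contractive
`⋆`-homomorphisms between the two C*-algebras in both directions, each sending generators to
generators; they are mutually inverse, so both are isometric. -/

noncomputable section
set_option synthInstance.maxHeartbeats 1000000
set_option maxHeartbeats 1000000
set_option linter.unusedVariables false

open scoped ENNReal

/-- `ℓ²(ι)` with complex coefficients. -/
abbrev l2 (ι : Type*) : Type _ := lp (fun _ : ι => ℂ) 2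

/-- The canonical orthonormal basis vector `δ_i` of `ℓ²(ι)`. -/
noncomputable def ket {ι : Type*} (i : ι) : l2 ι :=
  haveI := Classical.decEq ι
  lp.single 2 i 1

variable {G : Type*} [Group G]

/-- A word `a = (p₁, p₂, …, p_{2k-1}, p_{2k})` of even length over `P`, recorded as the list of
its consecutive pairs `(p₁,p₂), (p₃,p₄), …, (p_{2k-1},p_{2k})`. -/
abbrev Word (P : Submonoid G) := List (P × P)

/-- `ȧ = p₁⁻¹ p₂ ⋯ p_{2k-1}⁻¹ p_{2k} ∈ G`. -/
def wordElem (P : Submonoid G) (w : Word P) : G :=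
  (w.map (fun pq => ((pq.1 : G))⁻¹ * (pq.2 : G))).prod

/-- A word is neutral if `ȧ = e`. -/
def IsNeutral (P : Submonoid G) (w : Word P) : Prop := wordElem P w = 1

/-- `V̇_a = V_{p₁}^* V_{p₂} ⋯ V_{p_{2k-1}}^* V_{p_{2k}}`. -/
def dotted {A : Type*} [Monoid A] [Star A] (P : Submonoid G) (V : P → A) (w : Word P) : A :=
  (w.map (fun pq => star (V pq.1) * V pq.2)).prod

/-- The constructible right ideal `K(a) = {p ∈ P : L̇_a δ_p = δ_p}`, where `L` is the left
regular representation of `P` on `ℓ²(P)`. -/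
def KIdeal (P : Submonoid G) (L : P → (l2 P →L[ℂ] l2 P)) (w : Word P) : Set P :=
  {p : P | dotted P L w (ket p) = ket p}

/-- The index set `X = ⨿_{n ≥ 1} Pⁿ` underlying `ℋ̄ = ⊕_{n≥1} ℓ²(P)^{⊗n} ≅ ℓ²(X)`. -/
abbrev PTuples (P : Submonoid G) := Σ n : ℕ, Fin (n + 1) → P

/-- Coordinatewise left multiplication of a tuple by `p`; `L̄_p δ_x = δ_{p • x}`. -/
def pMul (P : Submonoid G) (p : P) (x : PTuples P) : PTuples P := ⟨x.1, fun i => p * x.2 i⟩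

open ContinuousLinearMap StarAlgebra StarSubalgebra

theorem StarSubalgebra.topologicalClosure_adjoin_le_centralizer {R A : Type*} [CommSemiring R]
    [StarRing R] [TopologicalSpace A] [Semiring A] [Algebra R A] [StarRing A] [StarModule R A]
    [IsSemitopologicalSemiring A] [ContinuousStar A] [T2Space A] {s t : Set A}
    (h : s ⊆ centralizer R t) : (adjoin R s).topologicalClosure ≤ centralizer R t :=
  topologicalClosure_minimal (adjoin_le h) (Set.isClosed_centralizer _)

section Compression

variable {𝕜 H K ι : Type*} [RCLike 𝕜]
  [NormedAddCommGroup H] [InnerProductSpace 𝕜 H] [CompleteSpace H]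
  [NormedAddCommGroup K] [InnerProductSpace 𝕜 K] [CompleteSpace K]

def compress (V : H →L[𝕜] K) : (K →L[𝕜] K) →L[𝕜] H →L[𝕜] H :=
  compL 𝕜 H K H (adjoint V) ∘L (compL 𝕜 H K K).flip V

theorem compress_apply (V : H →L[𝕜] K) (T : K →L[𝕜] K) :
    compress V T = adjoint V ∘L T ∘L V := rfl

theorem norm_compress_apply_le {V : H →L[𝕜] K} (hV : adjoint V ∘L V = 1) (T : K →L[𝕜] K) :
    ‖compress V T‖ ≤ ‖T‖ := by
  have hV1 : ‖V‖ ≤ 1 := opNorm_le_bound _ zero_le_one fun x => by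
    rw [(norm_map_iff_adjoint_comp_self V).2 hV x, one_mul]
  calc ‖compress V T‖ ≤ ‖adjoint V‖ * (‖T‖ * ‖V‖) :=
        (opNorm_comp_le _ _).trans (by gcongr; exact opNorm_comp_le _ _)
    _ ≤ 1 * (‖T‖ * 1) := by
        rw [LinearIsometryEquiv.norm_map]
        gcongr
    _ = ‖T‖ := by ring

theorem compress_one {V : H →L[𝕜] K} (hV : adjoint V ∘L V = 1) : compress V 1 = 1 := by
  rw [compress_apply, one_def, id_comp, hV]

theorem compress_star (V : H →L[𝕜] K) (T : K →L[𝕜] K) :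
    compress V (star T) = star (compress V T) := by
  simp only [compress_apply, star_eq_adjoint, adjoint_comp, adjoint_adjoint, comp_assoc]

theorem compress_comp {L : Type*} [NormedAddCommGroup L] [InnerProductSpace 𝕜 L] [CompleteSpace L]
    (V : H →L[𝕜] K) (W : L →L[𝕜] H) (T : K →L[𝕜] K) :
    compress W (compress V T) = compress (V ∘L W) T := by
  simp only [compress_apply, adjoint_comp, comp_assoc]

/-- For an isometry `V`: the range of `V` reduces `a`, and `a` acts on it as `b` acts on `H`. -/
def Intertwines (V : H →L[𝕜] K) (a : K →L[𝕜] K) (b : H →L[𝕜] H) : Prop :=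
  a ∘L V = V ∘L b ∧ adjoint V ∘L a = b ∘L adjoint V

namespace Intertwines

variable {V : H →L[𝕜] K} {a : K →L[𝕜] K} {b : H →L[𝕜] H}

theorem compress_eq (hV : adjoint V ∘L V = 1) (h : Intertwines V a b) : compress V a = b := by
  rw [compress_apply, h.1, ← comp_assoc, hV, one_def, id_comp]

theorem mem_centralizer (h : Intertwines V a b) :
    a ∈ centralizer 𝕜 {V ∘L adjoint V} := by
  have hP : star (V ∘L adjoint V) = V ∘L adjoint V := by
    rw [star_eq_adjoint, adjoint_comp, adjoint_adjoint]
  have hcomm : (V ∘L adjoint V) * a = a * (V ∘L adjoint V) := by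
    simp only [mul_def, comp_assoc, h.2]
    simp only [← comp_assoc, h.1]
  rw [mem_centralizer_iff]
  rintro _ rfl
  rw [hP]
  exact ⟨hcomm, hcomm⟩

theorem comp {L : Type*} [NormedAddCommGroup L] [InnerProductSpace 𝕜 L] [CompleteSpace L]
    {W : L →L[𝕜] H} {c : L →L[𝕜] L} (h : Intertwines V a b) (h' : Intertwines W b c) :
    Intertwines (V ∘L W) a c := by
  refine ⟨?_, ?_⟩
  · rw [← comp_assoc, h.1, comp_assoc, h'.1, comp_assoc]
  · rw [adjoint_comp, comp_assoc, h.2, ← comp_assoc, h'.2, comp_assoc]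

theorem mem_centralizer_self {U : K →L[𝕜] K} (h : Intertwines U a a) :
    a ∈ centralizer 𝕜 {U} := by
  rw [mem_centralizer_iff]
  rintro _ rfl
  exact ⟨h.1.symm, by rw [star_eq_adjoint]; exact h.2⟩

end Intertwines

theorem compress_mul {V : H →L[𝕜] K} (hV : adjoint V ∘L V = 1) (S : K →L[𝕜] K)
    {T : K →L[𝕜] K} (hT : T ∈ centralizer 𝕜 {V ∘L adjoint V}) :
    compress V (S * T) = compress V S * compress V T := by
  -- `T` commutes with the range projection `V V†`, so `T V = V V† T V`.
  have hTV : T ∘L V = V ∘L compress V T := by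
    have h := ((mem_centralizer_iff 𝕜).1 hT _ rfl).1
    calc T ∘L V = T ∘L (V ∘L adjoint V) ∘L V := by rw [comp_assoc V, hV, one_def, comp_id]
      _ = (V ∘L adjoint V) ∘L T ∘L V := by rw [← comp_assoc, ← mul_def, ← h, mul_def, comp_assoc]
      _ = V ∘L compress V T := by rw [compress_apply, comp_assoc]
  calc compress V (S * T) = adjoint V ∘L S ∘L T ∘L V := rfl
    _ = (adjoint V ∘L S ∘L V) ∘L compress V T := by rw [hTV, comp_assoc, comp_assoc]

def compressStarAlgHom {V : H →L[𝕜] K} (hV : adjoint V ∘L V = 1)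
    (S : StarSubalgebra 𝕜 (K →L[𝕜] K)) (hS : S ≤ centralizer 𝕜 {V ∘L adjoint V}) :
    S →⋆ₐ[𝕜] H →L[𝕜] H where
  toFun T := compress V T
  map_one' := compress_one hV
  map_mul' x y := compress_mul hV x (hS y.2)
  map_zero' := map_zero _
  map_add' x y := map_add (compress V) (x : K →L[𝕜] K) y
  commutes' c := by
    change compress V (algebraMap 𝕜 _ c) = _
    rw [Algebra.algebraMap_eq_smul_one, map_smul, compress_one hV, Algebra.algebraMap_eq_smul_one]
  map_star' T := compress_star V T

variable {A : ι → K →L[𝕜] K} {B : ι → H →L[𝕜] H}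

theorem compress_mem_topologicalClosure_adjoin {V : H →L[𝕜] K} (hV : adjoint V ∘L V = 1)
    (hAB : ∀ i, Intertwines V (A i) (B i)) {a : K →L[𝕜] K}
    (ha : a ∈ (adjoin 𝕜 (Set.range A)).topologicalClosure) :
    compress V a ∈ (adjoin 𝕜 (Set.range B)).topologicalClosure := by
  have hcent : adjoin 𝕜 (Set.range A) ≤ centralizer 𝕜 {V ∘L adjoint V} :=
    adjoin_le (Set.range_subset_iff.2 fun i => (hAB i).mem_centralizer)
  have hadjoin : Set.MapsTo (compress V) (adjoin 𝕜 (Set.range A)) (adjoin 𝕜 (Set.range B)) := by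
    intro x hx
    induction hx using adjoin_induction with
    | mem x hx =>
      obtain ⟨i, rfl⟩ := hx
      rw [(hAB i).compress_eq hV]
      exact subset_adjoin 𝕜 _ ⟨i, rfl⟩
    | algebraMap c =>
      rw [Algebra.algebraMap_eq_smul_one, map_smul, compress_one hV]
      exact SMulMemClass.smul_mem c (one_mem _)
    | add x y _ _ hx hy => rw [map_add]; exact add_mem hx hy
    | mul x y _ hyA hx hy => rw [compress_mul hV x (hcent hyA)]; exact mul_mem hx hy
    | star x _ hx => rw [compress_star]; exact star_mem hx
  rw [← SetLike.mem_coe, topologicalClosure_coe] at ha ⊢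
  exact map_mem_closure (compress V).continuous ha hadjoin

theorem compress_compress_eq_self {V : H →L[𝕜] K} {W : K →L[𝕜] H} (hV : adjoint V ∘L V = 1)
    (hW : adjoint W ∘L W = 1) (hAB : ∀ i, Intertwines V (A i) (B i))
    (hBA : ∀ i, Intertwines W (B i) (A i)) {a : K →L[𝕜] K}
    (ha : a ∈ (adjoin 𝕜 (Set.range A)).topologicalClosure) :
    compress W (compress V a) = a := by
  -- `a` commutes with the isometry `V W`, as its generators do.
  have hcomm : (V ∘L W) * a = a * (V ∘L W) :=
    ((mem_centralizer_iff 𝕜).1 (topologicalClosure_adjoin_le_centralizer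
      (Set.range_subset_iff.2 fun i => ((hAB i).comp (hBA i)).mem_centralizer_self) ha) _ rfl).1
  have hVW : adjoint (V ∘L W) ∘L (V ∘L W) = 1 := by
    rw [adjoint_comp, comp_assoc, ← comp_assoc (adjoint V), hV, one_def, id_comp, hW]
  rw [compress_comp, compress_apply, ← mul_def a, ← hcomm, mul_def, ← comp_assoc, hVW, one_def,
    id_comp]

end Compression

section L2

variable {ι κ : Type*}

theorem ket_eq_single [DecidableEq ι] (i : ι) : ket i = lp.single 2 i (1 : ℂ) := by
  unfold ket
  congr
  exact Subsingleton.elim _ _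

theorem inner_ket_left (i : ι) (x : l2 ι) : inner ℂ (ket i) x = x i := by
  classical
  simp [ket_eq_single, lp.inner_single_left]

theorem orthonormal_ket : Orthonormal ℂ (ket : ι → l2 ι) := by
  classical
  rw [orthonormal_iff_ite]
  intro i j
  rw [inner_ket_left, ket_eq_single, lp.single_apply, Pi.single_apply]

theorem ext_ket {F : Type*} [NormedAddCommGroup F] [NormedSpace ℂ F] {S T : l2 ι →L[ℂ] F}
    (h : ∀ i, S (ket i) = T (ket i)) : S = T := by
  classical
  refine lp.ext_continuousLinearMap (by norm_num) fun i => ext_ring ?_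
  simpa [ket_eq_single] using h i

def l2Map (f : ι → κ) (hf : Function.Injective f) : l2 ι →L[ℂ] l2 κ :=
  ((orthonormal_ket.comp f hf).orthogonalFamily.linearIsometry).toContinuousLinearMap

variable {f : ι → κ} (hf : Function.Injective f)

theorem l2Map_ket (i : ι) : l2Map f hf (ket i) = ket (f i) := by
  classical
  simp [l2Map, ket_eq_single]

theorem adjoint_l2Map_comp_l2Map : adjoint (l2Map f hf) ∘L l2Map f hf = 1 :=
  (norm_map_iff_adjoint_comp_self _).1 (LinearIsometry.norm_map _)

theorem adjoint_l2Map_ket (i : ι) : adjoint (l2Map f hf) (ket (f i)) = ket i := by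
  rw [← l2Map_ket hf, ← comp_apply, adjoint_l2Map_comp_l2Map, one_apply_eq_self]

theorem adjoint_l2Map_ket_of_notMem_range {k : κ} (hk : k ∉ Set.range f) :
    adjoint (l2Map f hf) (ket k) = 0 := by
  ext i
  rw [← inner_ket_left, adjoint_inner_right, l2Map_ket, orthonormal_ket.2 fun h => hk ⟨i, h⟩]
  rfl

theorem intertwines_l2Map {μ : ι → ι} {ν : κ → κ} (hfμ : ∀ i, f (μ i) = ν (f i))
    (hν : ∀ k, ν k ∈ Set.range f → k ∈ Set.range f) {a : l2 κ →L[ℂ] l2 κ} {b : l2 ι →L[ℂ] l2 ι}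
    (ha : ∀ k, a (ket k) = ket (ν k)) (hb : ∀ i, b (ket i) = ket (μ i)) :
    Intertwines (l2Map f hf) a b := by
  refine ⟨ext_ket fun i => ?_, ext_ket fun k => ?_⟩
  · rw [comp_apply, comp_apply, l2Map_ket, ha, hb, l2Map_ket, hfμ]
  · rw [comp_apply, comp_apply, ha]
    by_cases hk : k ∈ Set.range f
    · obtain ⟨i, rfl⟩ := hk
      rw [← hfμ, adjoint_l2Map_ket, adjoint_l2Map_ket, hb]
    · rw [adjoint_l2Map_ket_of_notMem_range hf (mt (hν k) hk),
        adjoint_l2Map_ket_of_notMem_range hf hk, map_zero]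

end L2

section Tuples

variable (P : Submonoid G)

theorem pMul_injective (p : P) : Function.Injective (pMul P p) := by
  rintro ⟨m, x⟩ ⟨n, y⟩ h
  obtain ⟨rfl, hxy⟩ := Sigma.mk.inj_iff.1 h
  congr
  funext i
  exact mul_left_cancel (congrFun (eq_of_heq hxy) i)

theorem mem_range_diag_of_pMul (p : P) {z : PTuples P × PTuples P}
    (h : Prod.map (pMul P p) (pMul P p) z ∈ Set.range fun x => (x, x)) :
    z ∈ Set.range fun x => (x, x) := by
  obtain ⟨x, hx⟩ := h
  obtain ⟨y₁, y₂⟩ := z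
  have h₁ : pMul P p y₁ = x := congrArg Prod.fst hx.symm
  have h₂ : pMul P p y₂ = x := congrArg Prod.snd hx.symm
  exact ⟨y₁, by rw [pMul_injective P p (h₁.trans h₂.symm)]⟩

def catEmbedding (m n : ℕ) : Fin (m + 1) ⊕ Fin (n + 1) → Fin (Nat.pair m n + 1 + 1) :=
  Fin.castLE (by have := Nat.add_le_pair m n; omega) ∘ finSumFinEquiv

theorem catEmbedding_injective (m n : ℕ) : Function.Injective (catEmbedding m n) :=
  (Fin.castLE_injective _).comp finSumFinEquiv.injective

/-- Concatenation of tuples, padded by repeating some of their entries to length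
`Nat.pair m n + 2` so that the lengths `m + 1` and `n + 1` of the pieces can be recovered. -/
def catMap (z : PTuples P × PTuples P) : PTuples P :=
  ⟨Nat.pair z.1.1 z.2.1 + 1, Sum.elim z.1.2 z.2.2 ∘ Function.invFun (catEmbedding z.1.1 z.2.1)⟩

theorem catMap_injective : Function.Injective (catMap P) := by
  rintro ⟨⟨m, x⟩, ⟨n, y⟩⟩ ⟨⟨m', x'⟩, ⟨n', y'⟩⟩ h
  obtain ⟨hmn, hxy⟩ := Sigma.mk.inj_iff.1 h
  obtain ⟨rfl, rfl⟩ := Nat.pair_eq_pair.1 (Nat.succ_injective hmn)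
  have hinv := (Function.leftInverse_invFun (catEmbedding_injective m n)).comp_eq_id
  have helim : Sum.elim x y = Sum.elim x' y' := by
    simpa only [Function.comp_assoc, hinv, Function.comp_id] using
      congrArg (· ∘ catEmbedding m n) (eq_of_heq hxy)
  have hx : x = x' := congrArg (· ∘ Sum.inl) helim
  have hy : y = y' := congrArg (· ∘ Sum.inr) helim
  subst hx hy
  rfl

theorem catMap_pMul (p : P) (z : PTuples P × PTuples P) :
    catMap P (Prod.map (pMul P p) (pMul P p) z) = pMul P p (catMap P z) := by
  obtain ⟨⟨m, x⟩, ⟨n, y⟩⟩ := z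
  refine Sigma.ext rfl (heq_of_eq (funext fun i => ?_))
  change Sum.elim (fun j => p * x j) (fun j => p * y j) (Function.invFun (catEmbedding m n) i)
    = p * Sum.elim x y (Function.invFun (catEmbedding m n) i)
  rcases Function.invFun (catEmbedding m n) i with j | j <;> rfl

theorem mem_range_catMap_of_pMul (p : P) {b : PTuples P} (h : pMul P p b ∈ Set.range (catMap P)) :
    b ∈ Set.range (catMap P) := by
  obtain ⟨⟨⟨m, x⟩, ⟨n, y⟩⟩, hz⟩ := h
  obtain ⟨N, g⟩ := b
  obtain ⟨rfl, hg⟩ := Sigma.mk.inj_iff.1 hz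
  set c := catEmbedding m n
  have hg' : Sum.elim x y ∘ Function.invFun c = fun i => p * g i := eq_of_heq hg
  refine ⟨(⟨m, g ∘ c ∘ Sum.inl⟩, ⟨n, g ∘ c ∘ Sum.inr⟩), Sigma.ext rfl (heq_of_eq ?_)⟩
  change Sum.elim ((g ∘ c) ∘ Sum.inl) ((g ∘ c) ∘ Sum.inr) ∘ Function.invFun c = g
  rw [Sum.elim_comp_inl_inr]
  funext i
  -- `g` agrees at positions with equal `invFun c`-image, because `p • g` does
  apply mul_left_cancel (a := p)
  calc p * g (c (Function.invFun c i))
      = Sum.elim x y (Function.invFun c (c (Function.invFun c i))) := (congrFun hg' _).symm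
    _ = Sum.elim x y (Function.invFun c i) := by
      rw [Function.leftInverse_invFun (catEmbedding_injective m n)]
    _ = p * g i := congrFun hg' i

end Tuples

/-- **Corollary (the enhanced left regular representation is self-absorbing).**
The map `L̄_p ↦ L̄_p ⊗ L̄_p` extends to a `*`-isomorphism from `𝒯̄_λ(P)` onto the
C*-algebra generated by `{L̄_p ⊗ L̄_p : p ∈ P}` in `B(ℋ̄ ⊗ ℋ̄)`. -/
theorem enhanced_self_absorbing (P : Submonoid G)
    (Lbar : P → (l2 (PTuples P) →L[ℂ] l2 (PTuples P)))
    (hLbar : ∀ (p : P) (x : PTuples P), Lbar p (ket x) = ket (pMul P p x))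
    (LL : P → (l2 (PTuples P × PTuples P) →L[ℂ] l2 (PTuples P × PTuples P)))
    (hLL : ∀ (p : P) (x y : PTuples P), LL p (ket (x, y)) = ket (pMul P p x, pMul P p y)) :
    ∃ φ : (StarAlgebra.adjoin ℂ (Set.range Lbar)).topologicalClosure →⋆ₐ[ℂ]
        (l2 (PTuples P × PTuples P) →L[ℂ] l2 (PTuples P × PTuples P)),
      (∀ (p : P) (h : Lbar p ∈ (StarAlgebra.adjoin ℂ (Set.range Lbar)).topologicalClosure),
        φ ⟨Lbar p, h⟩ = LL p) ∧
      (∀ a, ‖φ a‖ = ‖(a : l2 (PTuples P) →L[ℂ] l2 (PTuples P))‖) ∧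
      (∀ a, φ a ∈ (StarAlgebra.adjoin ℂ (Set.range LL)).topologicalClosure) ∧
      (∀ b ∈ (StarAlgebra.adjoin ℂ (Set.range LL)).topologicalClosure, ∃ a, φ a = b) := by
  have hLL' (p : P) (z : PTuples P × PTuples P) :
      LL p (ket z) = ket (Prod.map (pMul P p) (pMul P p) z) := hLL p z.1 z.2
  have hdiag : Function.Injective fun x : PTuples P => (x, x) := fun _ _ h => congrArg Prod.fst h
  have hV := adjoint_l2Map_comp_l2Map (catMap_injective P)
  have hW := adjoint_l2Map_comp_l2Map hdiag
  have hVint (p : P) : Intertwines (l2Map _ (catMap_injective P)) (Lbar p) (LL p) :=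
    intertwines_l2Map (catMap_injective P) (catMap_pMul P p)
      (fun _ => mem_range_catMap_of_pMul P p) (hLbar p) (hLL' p)
  have hWint (p : P) : Intertwines (l2Map _ hdiag) (LL p) (Lbar p) :=
    intertwines_l2Map hdiag (fun _ => rfl) (fun _ => mem_range_diag_of_pMul P p) (hLL' p) (hLbar p)
  refine ⟨compressStarAlgHom hV _ (topologicalClosure_adjoin_le_centralizer
      (Set.range_subset_iff.2 fun p => (hVint p).mem_centralizer)),
    fun p _ => (hVint p).compress_eq hV, fun a => le_antisymm (norm_compress_apply_le hV a) ?_,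
    fun a => compress_mem_topologicalClosure_adjoin hV hVint a.2,
    fun b hb => ⟨⟨_, compress_mem_topologicalClosure_adjoin hW hWint hb⟩,
      compress_compress_eq_self hW hV hWint hVint hb⟩⟩
  calc ‖(a : l2 (PTuples P) →L[ℂ] l2 (PTuples P))‖
      = ‖compress (l2Map _ hdiag) (compress (l2Map _ (catMap_injective P)) a)‖ := by
        rw [compress_compress_eq_self hV hW hVint hWint a.2]
    _ ≤ _ := norm_compress_apply_le hW _

end
end

section
/- Let P := ℕ ∖ {1} = {0, 2, 3, 4, …}, an additive submonoid of ℤ. Then the subsets 2+P, 3+P, 5+P, 6+P and (2+P) ∩ (3+P) of P are constructible ideals of P, one has (2+P) ∩ (3+P) = (5+P) ∪ (6+P), and yet (2+P) ∩ (3+P) ≠ 5+P and (2+P) ∩ (3+P) ≠ 6+P. In particular, P does not satisfy independence. -/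
noncomputable section
set_option synthInstance.maxHeartbeats 1000000
set_option maxHeartbeats 1000000
set_option linter.unusedVariables false

open scoped ENNReal

/-- The additive submonoid `P = ℕ ∖ {1} = {0, 2, 3, 4, …}` of `ℤ`. -/
def Pns : AddSubmonoid ℤ where
  carrier := {n : ℤ | 0 ≤ n ∧ n ≠ 1}
  zero_mem' := ⟨le_refl 0, by norm_num⟩
  add_mem' := by
    rintro a b ⟨ha0, ha1⟩ ⟨hb0, hb1⟩
    exact ⟨by omega, by omega⟩

lemma mem_Pns {n : ℤ} : n ∈ Pns ↔ 0 ≤ n ∧ n ≠ 1 := Iff.rfl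

/-- Words of even length over `Pns`, as lists of consecutive pairs. -/
abbrev WordA := List (Pns × Pns)

/-- `L̇_a = L_{p₁}^* L_{p₂} ⋯ L_{p_{2k-1}}^* L_{p_{2k}}`. -/
def dottedA (L : Pns → (l2 Pns →L[ℂ] l2 Pns)) (w : WordA) : l2 Pns →L[ℂ] l2 Pns :=
  (w.map (fun pq => star (L pq.1) * L pq.2)).prod

/-- The constructible ideal `K(a) = {p ∈ P : L̇_a δ_p = δ_p}`. -/
def KIdealA (L : Pns → (l2 Pns →L[ℂ] l2 Pns)) (w : WordA) : Set Pns :=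
  {p : Pns | dottedA L w (ket p) = ket p}

def pel (n : ℤ) (h : 0 ≤ n ∧ n ≠ 1) : Pns := ⟨n, mem_Pns.mpr h⟩
def p2 : Pns := pel 2 (by norm_num)
def p3 : Pns := pel 3 (by norm_num)
def p5 : Pns := pel 5 (by norm_num)
def p6 : Pns := pel 6 (by norm_num)

/-- The word `((0,k),(k,0))`, whose constructible ideal is `k + P`. -/
def wd (k : Pns) : WordA := [(0, k), (k, 0)]

/-- The word `((0,2),(2,0),(0,3),(3,0))`, whose constructible ideal is `(2+P) ∩ (3+P)`. -/
def w23 : WordA := [(0, p2), (p2, 0), (0, p3), (p3, 0)]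

/-- The set `k + P ⊆ P`. -/
def SP (k : ℤ) : Set Pns := {x : Pns | ∃ y : Pns, (x : ℤ) = k + (y : ℤ)}

/-!
On basis vectors `L_k L_k^* δ_p` is `δ_p` for `p ∈ k + P` and `0` otherwise, so the word
`((0,k),(k,0))` cuts out `k + P`, and concatenating words intersects their ideals.
Since `1 ∉ P`, `k + P = {k} ∪ [k + 2, ∞)`; hence `(2+P) ∩ (3+P) = [5, ∞)` is the union of
`5 + P ∌ 6` and `6 + P ∌ 5`.
-/

open Set Function

section Ket

variable {ι : Type*}

lemma ket_apply [DecidableEq ι] (i j : ι) : (ket i : l2 ι) j = if j = i then 1 else 0 := by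
  simp [ket, Pi.single_apply]

lemma ket_ne_zero (i : ι) : (ket i : l2 ι) ≠ 0 := by
  classical
  intro h
  simpa [ket_apply] using congrArg (fun x : l2 ι => x i) h

variable {A : l2 ι →L[ℂ] l2 ι} {f : ι → ι}

lemma star_apply_ket_apply (hA : ∀ j, A (ket j) = ket (f j)) (i j : ι) :
    star A (ket i) j = ket i (f j) := by
  classical
  calc star A (ket i) j = inner ℂ (ket j) (star A (ket i)) := by
        simp [ket, lp.inner_single_left]
    _ = inner ℂ (A (ket j)) (ket i) := by
        rw [ContinuousLinearMap.star_eq_adjoint, ContinuousLinearMap.adjoint_inner_right]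
    _ = ket i (f j) := by
        rw [hA]
        simp [ket, lp.inner_single_left]

lemma star_apply_ket_of_injective (hf : Injective f) (hA : ∀ j, A (ket j) = ket (f j)) (j : ι) :
    star A (ket (f j)) = ket j := by
  classical
  ext r
  rw [star_apply_ket_apply hA, ket_apply, ket_apply, hf.eq_iff]

lemma star_apply_ket_of_notMem_range (hA : ∀ j, A (ket j) = ket (f j)) {i : ι}
    (hi : i ∉ range f) : star A (ket i) = 0 := by
  classical
  ext r
  rw [star_apply_ket_apply hA, ket_apply, if_neg fun h => hi ⟨r, h⟩]
  rfl

open Classical in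
lemma apply_star_apply_ket (hf : Injective f) (hA : ∀ j, A (ket j) = ket (f j)) (i : ι) :
    A (star A (ket i)) = if i ∈ range f then ket i else 0 := by
  split_ifs with hi
  · obtain ⟨j, rfl⟩ := hi
    rw [star_apply_ket_of_injective hf hA, hA]
  · rw [star_apply_ket_of_notMem_range hA hi, map_zero]

end Ket

lemma dottedA_append (L : Pns → (l2 Pns →L[ℂ] l2 Pns)) (v w : WordA) :
    dottedA L (v ++ w) = dottedA L v * dottedA L w := by
  simp [dottedA]

lemma range_add_eq_SP (k : Pns) : range (k + ·) = SP k := by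
  ext p
  simp only [mem_range, SP, mem_ofPred_eq, Subtype.ext_iff, AddSubmonoid.coe_add, eq_comm]

lemma mem_SP {k : ℤ} {x : Pns} : x ∈ SP k ↔ k ≤ x ∧ (x : ℤ) ≠ k + 1 := by
  constructor
  · rintro ⟨y, hy⟩
    have := mem_Pns.mp y.2
    omega
  · rintro ⟨h1, h2⟩
    exact ⟨⟨x - k, mem_Pns.mpr (by omega)⟩, by simp⟩

section LeftRegular

variable {L : Pns → (l2 Pns →L[ℂ] l2 Pns)} (hL : ∀ p q : Pns, L p (ket q) = ket (p + q))
include hL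

open Classical in
lemma dottedA_wd_apply_ket (k p : Pns) :
    dottedA L (wd k) (ket p) = if p ∈ SP k then ket p else 0 := by
  have hL0 : star (L 0) (ket p) = ket p := by
    simpa using star_apply_ket_of_injective (add_right_injective 0) (hL 0) p
  simp only [dottedA, wd, List.map_cons, List.map_nil, List.prod_cons, List.prod_nil, mul_one,
    mul_apply_eq_comp, hL 0, zero_add,
    apply_star_apply_ket (add_right_injective k) (hL k), range_add_eq_SP]
  split_ifs
  · exact hL0
  · exact map_zero _

lemma KIdealA_wd (k : Pns) : KIdealA L (wd k) = SP k := by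
  ext p
  simp only [KIdealA, mem_ofPred_eq, dottedA_wd_apply_ket hL]
  split_ifs with hp
  · simp [hp]
  · simpa [hp] using (ket_ne_zero p).symm

lemma KIdealA_wd_append_wd (k l : Pns) : KIdealA L (wd k ++ wd l) = SP k ∩ SP l := by
  ext p
  simp only [KIdealA, mem_ofPred_eq, mem_inter_iff, dottedA_append, mul_apply_eq_comp,
    dottedA_wd_apply_ket hL l]
  by_cases h : p ∈ SP l
  · rw [if_pos h, and_iff_left h]
    exact Set.ext_iff.mp (KIdealA_wd hL k) p
  · rw [if_neg h, map_zero]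
    exact iff_of_false (ket_ne_zero p).symm fun hp => h hp.2

end LeftRegular

lemma SP_two_inter_SP_three : SP 2 ∩ SP 3 = SP 5 ∪ SP 6 := by
  ext p
  simp only [mem_inter_iff, mem_union, mem_SP]
  omega

lemma SP_two_inter_SP_three_ne_SP_five : SP 2 ∩ SP 3 ≠ SP 5 := by
  intro h
  have h6 : p6 ∈ SP 5 := h ▸ SP_two_inter_SP_three ▸ Or.inr ⟨0, rfl⟩
  exact absurd (mem_SP.mp h6) (by decide)

lemma SP_two_inter_SP_three_ne_SP_six : SP 2 ∩ SP 3 ≠ SP 6 := by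
  intro h
  have h5 : p5 ∈ SP 6 := h ▸ SP_two_inter_SP_three ▸ Or.inl ⟨0, rfl⟩
  exact absurd (mem_SP.mp h5) (by decide)

lemma not_independent_of_eq_union {L : Pns → (l2 Pns →L[ℂ] l2 Pns)} {a b c : WordA}
    (h : KIdealA L a = KIdealA L b ∪ KIdealA L c) (hb : KIdealA L a ≠ KIdealA L b)
    (hc : KIdealA L a ≠ KIdealA L c) :
    ¬ ∀ (a : WordA) (n : ℕ) (b : Fin n → WordA), 1 ≤ n →
        KIdealA L a = ⋃ i, KIdealA L (b i) → ∃ i, KIdealA L a = KIdealA L (b i) := by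
  intro hind
  obtain ⟨i, hi⟩ := hind a 2 ![b, c] (by norm_num) (by
    rw [h]
    ext
    simp [Fin.exists_fin_two])
  fin_cases i
  · exact hb hi
  · exact hc hi

/-- **(Example 6.1: `P = ℕ ∖ {1}` does not satisfy independence.)**
The sets `2+P, 3+P, 5+P, 6+P` and `(2+P) ∩ (3+P)` are constructible ideals of `P`,
`(2+P) ∩ (3+P) = (5+P) ∪ (6+P)`, yet `(2+P) ∩ (3+P)` is neither `5+P` nor `6+P`.
In particular `P` does not satisfy independence. -/
theorem nat_without_one_not_independent
    (L : Pns → (l2 Pns →L[ℂ] l2 Pns))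
    (hL : ∀ p q : Pns, L p (ket q) = ket (p + q)) :
    (KIdealA L (wd p2) = SP 2) ∧ (KIdealA L (wd p3) = SP 3) ∧
    (KIdealA L (wd p5) = SP 5) ∧ (KIdealA L (wd p6) = SP 6) ∧
    (KIdealA L w23 = SP 2 ∩ SP 3) ∧
    (SP 2 ∩ SP 3 = SP 5 ∪ SP 6) ∧
    (SP 2 ∩ SP 3 ≠ SP 5) ∧ (SP 2 ∩ SP 3 ≠ SP 6) ∧
    ¬ (∀ (a : WordA) (n : ℕ) (b : Fin n → WordA), 1 ≤ n →
        KIdealA L a = ⋃ i, KIdealA L (b i) →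
        ∃ i, KIdealA L a = KIdealA L (b i)) := by
  have h5 : KIdealA L (wd p5) = SP 5 := KIdealA_wd hL p5
  have h6 : KIdealA L (wd p6) = SP 6 := KIdealA_wd hL p6
  have h23 : KIdealA L w23 = SP 2 ∩ SP 3 := KIdealA_wd_append_wd hL p2 p3
  refine ⟨KIdealA_wd hL p2, KIdealA_wd hL p3, h5, h6, h23, SP_two_inter_SP_three,
    SP_two_inter_SP_three_ne_SP_five, SP_two_inter_SP_three_ne_SP_six, ?_⟩
  apply not_independent_of_eq_union (a := w23) (b := wd p5) (c := wd p6)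
  · rw [h23, h5, h6, SP_two_inter_SP_three]
  · rw [h23, h5]
    exact SP_two_inter_SP_three_ne_SP_five
  · rw [h23, h6]
    exact SP_two_inter_SP_three_ne_SP_six

end
end
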